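/- For every extended Young diagram Y of charge n and all integers j, k, the Fock-space operators satisfy e_k^∞ e_j^∞ e_k^∞ Y = 0. -/

import Mathlib

noncomputable section
open scoped Classical

abbrev K : Type := FractionRing (MvPolynomial (Fin 2) ℚ)

def rr : K := algebraMap (MvPolynomial (Fin 2) ℚ) K (MvPolynomial.X 0)
def ss : K := algebraMap (MvPolynomial (Fin 2) ℚ) K (MvPolynomial.X 1)

/-- An extended Young diagram of charge `n`: a weakly increasing integer sequence
eventually equal to `n`. -/
structure EYD (n : ℤ) where
  y : ℕ → ℤ
  mono : ∀ k, y k ≤ y (k + 1)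
  charge : ∃ N, ∀ k, N ≤ k → y k = n

namespace EYD

variable {n : ℤ}

/-- `Y` has a convex corner on diagonal `i` at column `k`. -/
def ConvexAt (Y : EYD n) (i : ℤ) (k : ℕ) : Prop :=
  Y.y k < Y.y (k + 1) ∧ Y.y k + k + 1 = i

/-- `Y` has a concave corner on diagonal `i` at column `k`. -/
def ConcaveAt (Y : EYD n) (i : ℤ) (k : ℕ) : Prop :=
  (k = 0 ∨ ∃ j, k = j + 1 ∧ Y.y j < Y.y k) ∧ Y.y k + k = i

/-- Replace the convex corner at column `k` by a concave one. -/
def up (Y : EYD n) (k : ℕ) (h : Y.y k < Y.y (k + 1)) : EYD n where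
  y := Function.update Y.y k (Y.y k + 1)
  mono := by
    intro m
    rcases eq_or_ne m k with rfl | h1
    · rw [Function.update_self, Function.update_of_ne (show m + 1 ≠ m by omega)]
      omega
    · rcases eq_or_ne (m + 1) k with h2 | h2
      · have hm := Y.mono m
        rw [Function.update_of_ne h1, h2, Function.update_self, ← h2]
        omega
      · rw [Function.update_of_ne h1, Function.update_of_ne h2]
        exact Y.mono m
  charge := by
    obtain ⟨N, hN⟩ := Y.charge
    exact ⟨max N (k + 1), fun m hm => by
      rw [Function.update_of_ne (show m ≠ k by omega)]
      exact hN m (by omega)⟩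

/-- Replace the concave corner at column `k` by a convex one. -/
def down (Y : EYD n) (k : ℕ) (h : k = 0 ∨ ∃ j, k = j + 1 ∧ Y.y j < Y.y k) : EYD n where
  y := Function.update Y.y k (Y.y k - 1)
  mono := by
    intro m
    rcases eq_or_ne m k with rfl | h1
    · rw [Function.update_self, Function.update_of_ne (show m + 1 ≠ m by omega)]
      have := Y.mono m
      omega
    · rcases eq_or_ne (m + 1) k with h2 | h2
      · rw [Function.update_of_ne h1, h2, Function.update_self]
        rcases h with h | ⟨j, hj, hjy⟩
        · omega
        · have : j = m := by omega
          subst this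
          omega
      · rw [Function.update_of_ne h1, Function.update_of_ne h2]
        exact Y.mono m
  charge := by
    obtain ⟨N, hN⟩ := Y.charge
    exact ⟨max N (k + 1), fun m hm => by
      rw [Function.update_of_ne (show m ≠ k by omega)]
      exact hN m (by omega)⟩

/-- The action of `e_i^∞` on a diagram: turn the convex corner on diagonal `i`
into a concave one, if any. -/
def eAct (i : ℤ) (Y : EYD n) : Option (EYD n) :=
  if h : ∃ k, Y.ConvexAt i k then some (Y.up h.choose h.choose_spec.1) else none

/-- The action of `f_i^∞` on a diagram: turn the concave corner on diagonal `i`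
into a convex one, if any. -/
def fAct (i : ℤ) (Y : EYD n) : Option (EYD n) :=
  if h : ∃ k, Y.ConcaveAt i k then some (Y.down h.choose h.choose_spec.1) else none

end EYD

/-- The Fock space of charge `n`. -/
abbrev Fock (n : ℤ) : Type := EYD n →₀ K

def ovec {n : ℤ} (o : Option (EYD n)) : Fock n :=
  o.elim 0 fun Y => Finsupp.single Y 1

/-- The linear operator on Fock space induced by a partially defined map on diagrams. -/
def opOf {n : ℤ} (a : EYD n → Option (EYD n)) : Fock n →ₗ[K] Fock n :=
  Finsupp.lsum K fun Y => LinearMap.smulRight (LinearMap.id : K →ₗ[K] K) (ovec (a Y))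

/-- A diagonal operator on Fock space. -/
def diagOp {n : ℤ} (c : EYD n → K) : Fock n →ₗ[K] Fock n :=
  Finsupp.lsum K fun Y => LinearMap.smulRight (LinearMap.id : K →ₗ[K] K) (c Y • Finsupp.single Y 1)

def Eop (n i : ℤ) : Fock n →ₗ[K] Fock n := opOf (EYD.eAct i)
def Fop (n i : ℤ) : Fock n →ₗ[K] Fock n := opOf (EYD.fAct i)

/-!
Read a diagram through its Maya diagram `M = {y m + m}`, a set of integers. The diagram has a
convex corner on diagonal `i` exactly when `i - 1 ∈ M` and `i ∉ M`, and `e_i^∞` then replaces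
`i - 1` by `i` in `M`. After `e_k^∞` we have `k ∈ M` and `k - 1 ∉ M`; for `e_k^∞` to act again,
a single `e_j^∞` would have to both insert `k - 1` (so `j = k - 1`) and remove `k` (so `j = k + 1`).
-/
namespace EYD

variable {n : ℤ}

def diag (Y : EYD n) (m : ℕ) : ℤ := Y.y m + m

def maya (Y : EYD n) : Set ℤ := Set.range Y.diag

lemma diag_strictMono (Y : EYD n) : StrictMono Y.diag :=
  strictMono_nat_of_lt_succ fun m => by
    have := Y.mono m
    simp only [diag]
    push_cast
    omega

lemma ConvexAt.diag_eq {Y : EYD n} {i : ℤ} {c : ℕ} (h : Y.ConvexAt i c) : Y.diag c = i - 1 := by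
  have := h.2
  simp only [diag]
  omega

lemma ConvexAt.not_mem_maya {Y : EYD n} {i : ℤ} {c : ℕ} (h : Y.ConvexAt i c) : i ∉ Y.maya := by
  rintro ⟨m, hm⟩
  have hcm : c < m := Y.diag_strictMono.lt_iff_lt.mp (by rw [h.diag_eq, hm]; omega)
  have hle := Y.diag_strictMono.monotone (show c + 1 ≤ m from hcm)
  have := h.1
  have := h.2
  simp only [diag] at hm hle
  push_cast at hle
  omega

lemma maya_up (Y : EYD n) (c : ℕ) (h : Y.y c < Y.y (c + 1)) :
    (Y.up c h).maya = insert (Y.diag c + 1) (Y.maya \ {Y.diag c}) := by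
  have hdiag : (Y.up c h).diag = Function.update Y.diag c (Y.diag c + 1) := by
    ext m
    rcases eq_or_ne m c with rfl | hm
    · simp only [diag, up, Function.update_self]
      ring
    · simp [diag, up, hm]
  ext x
  simp only [maya, hdiag, Set.mem_range, Set.mem_insert_iff, Set.mem_sdiff,
    Set.mem_singleton_iff]
  constructor
  · rintro ⟨m, rfl⟩
    rcases eq_or_ne m c with rfl | hm
    · exact Or.inl (Function.update_self ..)
    · rw [Function.update_of_ne hm]
      exact Or.inr ⟨⟨m, rfl⟩, Y.diag_strictMono.injective.ne hm⟩
  · rintro (rfl | ⟨⟨m, rfl⟩, hm⟩)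
    · exact ⟨c, Function.update_self ..⟩
    · exact ⟨m, Function.update_of_ne (fun h => hm (congrArg Y.diag h)) ..⟩

lemma maya_of_eAct_eq_some {Y Y' : EYD n} {i : ℤ} (h : Y.eAct i = some Y') :
    i - 1 ∈ Y.maya ∧ i ∉ Y.maya ∧ Y'.maya = insert i (Y.maya \ {i - 1}) := by
  unfold eAct at h
  split_ifs at h with hconv
  cases h
  have hc := hconv.choose_spec
  rw [maya_up, hc.diag_eq, sub_add_cancel]
  exact ⟨⟨_, hc.diag_eq⟩, hc.not_mem_maya, rfl⟩

lemma eAct_bind_eAct_bind_eAct (j k : ℤ) (Y : EYD n) :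
    ((Y.eAct k).bind (eAct j)).bind (eAct k) = none := by
  rcases h₁ : Y.eAct k with _ | Y₁
  · rfl
  rcases h₂ : Y₁.eAct j with _ | Y₂
  · simp [h₂]
  refine Option.eq_none_iff_forall_ne_some.mpr fun Y₃ h₃ => ?_
  simp only [Option.bind_some, h₂] at h₃
  obtain ⟨-, -, hM₁⟩ := maya_of_eAct_eq_some h₁
  obtain ⟨-, -, hM₂⟩ := maya_of_eAct_eq_some h₂
  obtain ⟨hk₁, hk₂, -⟩ := maya_of_eAct_eq_some h₃
  have hk : k ∈ Y₁.maya := by simp [hM₁]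
  have hk' : k - 1 ∉ Y₁.maya := by simp [hM₁]
  simp only [hM₂, Set.mem_insert_iff, Set.mem_sdiff, Set.mem_singleton_iff] at hk₁ hk₂
  have hj : k - 1 = j := hk₁.resolve_right fun h => hk' h.1
  have hj' : k = j - 1 := by
    by_contra hne
    exact hk₂ (Or.inr ⟨hk, hne⟩)
  omega

end EYD

lemma opOf_ovec {n : ℤ} (a : EYD n → Option (EYD n)) (o : Option (EYD n)) :
    opOf a (ovec o) = ovec (o.bind a) := by
  cases o with
  | none => exact map_zero _
  | some Y => simp [opOf, ovec]

/-- For all integers `j, k` and every extended Young diagram `Y`,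
`e_k^∞ e_j^∞ e_k^∞ Y = 0`. -/
theorem stmt_15 (n j k : ℤ) (Y : EYD n) :
    Eop n k (Eop n j (Eop n k (Finsupp.single Y 1))) = 0 := by
  change Eop n k (Eop n j (Eop n k (ovec (some Y)))) = 0
  simp only [Eop, opOf_ovec, Option.bind_some, EYD.eAct_bind_eAct_bind_eAct]
  rfl
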